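/- arXiv:2103.06971 — 3 statements merged into one kernel-verified Lean document; each statement's English description precedes it below -/
import Mathlib

section
/- Let n ∈ ℕ with n ≥ 2 and let G be a nonempty bounded subset of ℝⁿ. Let F : ∂𝔹_n × [0, diam(G)] → ℂ be Lipschitz continuous, with Lipschitz constant Lip(F) ≡ sup{ |F(θ',r') − F(θ'',r'')| / (|θ'−θ''| + |r'−r''|) : (θ',r'), (θ'',r'') ∈ ∂𝔹_n × [0,diam(G)], (θ',r') ≠ (θ'',r'') }. Then for all x', x'' ∈ G with x' ≠ x'' and all y ∈ G∖𝔹_n(x', 2|x'−x''|) one has | F((x'−y)/|x'−y|, |x'−y|) − F((x''−y)/|x''−y|, |x''−y|) | ≤ Lip(F)(2 + diam(G)) |x'−x''| / |x'−y|. -/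
open Metric Set

lemma unit_sub_unit_le {E : Type*} [NormedAddCommGroup E] [NormedSpace ℝ E]
    (a b : E) (ha : a ≠ 0) :
    ‖‖a‖⁻¹ • a - ‖b‖⁻¹ • b‖ ≤ 2 * ‖a - b‖ / ‖a‖ := by
  have ha' : (0:ℝ) < ‖a‖ := norm_pos_iff.mpr ha
  by_cases hb : b = 0
  · simp only [hb, norm_zero, sub_zero, norm_smul, norm_inv, norm_norm,
      inv_zero, zero_smul, inv_mul_cancel₀ ha'.ne']
    rw [mul_div_assoc, div_self ha'.ne']
    norm_num
  · have hb' : (0:ℝ) < ‖b‖ := norm_pos_iff.mpr hb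
    have key : ‖a‖⁻¹ • a - ‖b‖⁻¹ • b
        = ‖a‖⁻¹ • (a - b) + (‖a‖⁻¹ - ‖b‖⁻¹) • b := by
      rw [smul_sub, sub_smul]; abel
    rw [key]
    have h1 : ‖‖a‖⁻¹ • (a - b)‖ = ‖a - b‖ / ‖a‖ := by
      rw [norm_smul, norm_inv, norm_norm, div_eq_inv_mul]
    have h2 : ‖(‖a‖⁻¹ - ‖b‖⁻¹) • b‖ ≤ ‖a - b‖ / ‖a‖ := by
      rw [norm_smul, Real.norm_eq_abs]
      have e1 : ‖a‖⁻¹ - ‖b‖⁻¹ = (‖b‖ - ‖a‖) / (‖a‖ * ‖b‖) := by field_simp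
      have e2 : |‖a‖⁻¹ - ‖b‖⁻¹| = |‖b‖ - ‖a‖| / (‖a‖ * ‖b‖) := by
        rw [e1, abs_div, abs_of_pos (by positivity : (0:ℝ) < ‖a‖ * ‖b‖)]
      rw [e2]
      have e3 : |‖b‖ - ‖a‖| / (‖a‖ * ‖b‖) * ‖b‖ = |‖b‖ - ‖a‖| / ‖a‖ := by
        field_simp
      rw [e3]
      have habs : |‖b‖ - ‖a‖| ≤ ‖a - b‖ := by
        rw [norm_sub_rev]; exact abs_norm_sub_norm_le b a
      exact div_le_div_of_nonneg_right habs ha'.le |>.trans_eq rfl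
    calc ‖‖a‖⁻¹ • (a - b) + (‖a‖⁻¹ - ‖b‖⁻¹) • b‖
        ≤ ‖‖a‖⁻¹ • (a - b)‖ + ‖(‖a‖⁻¹ - ‖b‖⁻¹) • b‖ := norm_add_le _ _
      _ ≤ ‖a - b‖ / ‖a‖ + ‖a - b‖ / ‖a‖ := by rw [h1]; linarith
      _ = 2 * ‖a - b‖ / ‖a‖ := by ring

/-- if `F` is Lipschitz continuous on `∂𝔹_n × [0, diam G]` (with
Lipschitz constant `L` with respect to the distance `‖θ'-θ''‖ + |r'-r''|`),
then for all `x' ≠ x''` in `G` and `y ∈ G ∖ 𝔹_n(x', 2‖x'-x''‖)` one has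
`‖F((x'-y)/‖x'-y‖, ‖x'-y‖) - F((x''-y)/‖x''-y‖, ‖x''-y‖)‖ ≤
  L (2 + diam G) ‖x'-x''‖ / ‖x'-y‖`. -/
theorem stmt_7 {n : ℕ} (hn : 2 ≤ n) (G : Set (EuclideanSpace ℝ (Fin n)))
    (hGne : G.Nonempty) (hGb : Bornology.IsBounded G)
    (F : EuclideanSpace ℝ (Fin n) × ℝ → ℂ) (L : ℝ)
    (hF : ∀ p ∈ (sphere (0 : EuclideanSpace ℝ (Fin n)) 1) ×ˢ (Icc 0 (diam G)),
          ∀ q ∈ (sphere (0 : EuclideanSpace ℝ (Fin n)) 1) ×ˢ (Icc 0 (diam G)),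
            ‖F p - F q‖ ≤ L * (‖p.1 - q.1‖ + |p.2 - q.2|)) :
    ∀ x' ∈ G, ∀ x'' ∈ G, x' ≠ x'' → ∀ y ∈ G, y ∉ ball x' (2 * ‖x' - x''‖) →
      ‖F (‖x' - y‖⁻¹ • (x' - y), ‖x' - y‖) - F (‖x'' - y‖⁻¹ • (x'' - y), ‖x'' - y‖)‖ ≤
        L * (2 + diam G) * ‖x' - x''‖ / ‖x' - y‖ := by
  intro x' hx' x'' hx'' hne y hy hyb
  set a := x' - y with ha_def
  set b := x'' - y with hb_def
  have hd : (0:ℝ) < ‖x' - x''‖ := by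
    rw [norm_pos_iff, sub_ne_zero]; exact hne
  have hya : 2 * ‖x' - x''‖ ≤ ‖a‖ := by
    have := hyb
    rw [mem_ball, dist_comm, dist_eq_norm] at this
    linarith [not_lt.mp this]
  have ha' : (0:ℝ) < ‖a‖ := by linarith
  have ha0 : a ≠ 0 := norm_pos_iff.mp ha'
  have hab : a - b = x' - x'' := by rw [ha_def, hb_def]; abel
  have hb' : (0:ℝ) < ‖b‖ := by
    have h1 : ‖a‖ - ‖b‖ ≤ ‖a - b‖ := norm_sub_norm_le a b
    rw [hab] at h1
    linarith
  have hb0 : b ≠ 0 := norm_pos_iff.mp hb'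
  -- L ≥ 0
  have hL : 0 ≤ L := by
    set e : EuclideanSpace ℝ (Fin n) :=
      EuclideanSpace.single ⟨0, by omega⟩ 1 with he
    have hes : e ∈ sphere (0 : EuclideanSpace ℝ (Fin n)) 1 := by
      simp [he, EuclideanSpace.norm_single]
    have hes' : -e ∈ sphere (0 : EuclideanSpace ℝ (Fin n)) 1 := by
      simpa using hes
    have h0 : (0:ℝ) ∈ Icc 0 (diam G) := ⟨le_refl _, diam_nonneg⟩
    have := hF (e, 0) ⟨hes, h0⟩ (-e, 0) ⟨hes', h0⟩
    simp only [sub_neg_eq_add, sub_zero, sub_self, abs_zero, add_zero] at this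
    have h2 : ‖e + e‖ = 2 := by
      have : e + e = (2:ℝ) • e := by module
      rw [this, norm_smul]
      simp [he, EuclideanSpace.norm_single]
    rw [h2] at this
    nlinarith [norm_nonneg (F (e, 0) - F (-e, 0))]
  have haD : ‖a‖ ≤ diam G := by
    have := dist_le_diam_of_mem hGb hx' hy
    rwa [dist_eq_norm] at this
  have hbD : ‖b‖ ≤ diam G := by
    have := dist_le_diam_of_mem hGb hx'' hy
    rwa [dist_eq_norm] at this
  have hpa : (‖a‖⁻¹ • a, ‖a‖) ∈
      (sphere (0 : EuclideanSpace ℝ (Fin n)) 1) ×ˢ (Icc 0 (diam G)) := by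
    constructor
    · simp [norm_smul, abs_of_pos (inv_pos.mpr ha'), inv_mul_cancel₀ ha'.ne']
    · exact ⟨norm_nonneg a, haD⟩
  have hpb : (‖b‖⁻¹ • b, ‖b‖) ∈
      (sphere (0 : EuclideanSpace ℝ (Fin n)) 1) ×ˢ (Icc 0 (diam G)) := by
    constructor
    · simp [norm_smul, abs_of_pos (inv_pos.mpr hb'), inv_mul_cancel₀ hb'.ne']
    · exact ⟨norm_nonneg b, hbD⟩
  have hmain := hF _ hpa _ hpb
  simp only at hmain
  have hang : ‖‖a‖⁻¹ • a - ‖b‖⁻¹ • b‖ ≤ 2 * ‖x' - x''‖ / ‖a‖ := by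
    have := unit_sub_unit_le a b ha0
    rwa [hab] at this
  have hrad : |‖a‖ - ‖b‖| ≤ ‖x' - x''‖ := by
    have := abs_norm_sub_norm_le a b
    rwa [hab] at this
  calc ‖F (‖a‖⁻¹ • a, ‖a‖) - F (‖b‖⁻¹ • b, ‖b‖)‖
      ≤ L * (‖‖a‖⁻¹ • a - ‖b‖⁻¹ • b‖ + |‖a‖ - ‖b‖|) := hmain
    _ ≤ L * (2 * ‖x' - x''‖ / ‖a‖ + ‖x' - x''‖) := by
        apply mul_le_mul_of_nonneg_left _ hL
        linarith
    _ ≤ L * (2 + diam G) * ‖x' - x''‖ / ‖a‖ := by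
        have h : 2 * ‖x' - x''‖ / ‖a‖ + ‖x' - x''‖ ≤ (2 + diam G) * ‖x' - x''‖ / ‖a‖ := by
          rw [div_add' _ _ _ ha'.ne', div_le_div_iff₀ ha' ha']
          nlinarith [mul_le_mul_of_nonneg_left haD hd.le]
        calc L * (2 * ‖x' - x''‖ / ‖a‖ + ‖x' - x''‖)
            ≤ L * ((2 + diam G) * ‖x' - x''‖ / ‖a‖) := mul_le_mul_of_nonneg_left h hL
          _ = L * (2 + diam G) * ‖x' - x''‖ / ‖a‖ := by ring
end

section
/- Let n ∈ ℕ with n ≥ 2 and let G be a nonempty bounded subset of ℝⁿ. Let A₀ : ∂𝔹_n → ℂ and A₁ : ∂𝔹_n × ℝ → ℂ be continuous, b₀ ∈ ℂ, and B₁, C : ℝⁿ → ℂ be continuous, and let S : ℝⁿ∖{0} → ℂ be defined by S(x) ≡ |x|^{2−n}A₀(x/|x|) + |x|^{3−n}A₁(x/|x|, |x|) + b₀ ln|x| + B₁(x) ln|x| + C(x). Assume in addition that the function A(θ,r) ≡ A₀(θ) + rA₁(θ,r) is Lipschitz continuous on ∂𝔹_n × [0, diam(G)] with respect to the distance |θ'−θ''|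 + |r'−r''|, and that B ≡ b₀ + B₁ and C are continuously differentiable on ℝⁿ. Then sup{ (|x'−y|^{n−1}/|x'−x''|) |S(x'−y) − S(x''−y)| : x', x'' ∈ G, x' ≠ x'', y ∈ G∖𝔹_n(x', 2|x'−x''|) } < +∞. -/
open Metric Set

/-!
Put `u = x' - y`, `v = x'' - y`, `p = 2 - n` and `A(θ, r) = A₀(θ) + r A₁(θ, r)`, so that
`S(x) = ‖x‖ ^ p A(x / ‖x‖, ‖x‖) + B(x) log ‖x‖ + C(x)`. The separation condition says
`2 ‖u - v‖ ≤ ‖u‖`, hence `‖u‖ / 2 ≤ ‖v‖`. On `[‖u‖ / 2, ∞)` the derivatives of `t ↦ t ^ p` and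
`log` are at most `|p| (‖u‖ / 2) ^ (p - 1)` and `2 / ‖u‖`, and
`‖u / ‖u‖ - v / ‖v‖‖ ≤ 2 ‖u - v‖ / ‖u‖`. So the first term of `S` changes by
`O(‖u‖ ^ (p - 1) ‖u - v‖)`, exactly compensated by the weight `‖u‖ ^ (n - 1) = ‖u‖ ^ (1 - p)`,
while the logarithmic term changes by `O(‖u‖⁻¹ ‖u - v‖)` and `C` is Lipschitz on bounded sets.
`A` is bounded, being Lipschitz on a bounded set.
-/

namespace Real

lemma abs_rpow_sub_rpow_le_of_nonpos {p m a b : ℝ} (hp : p ≤ 0) (hm : 0 < m) (ha : m ≤ a)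
    (hb : m ≤ b) : |a ^ p - b ^ p| ≤ |p| * m ^ (p - 1) * |a - b| := by
  have hderiv : ∀ t ∈ Ici m, ‖deriv (fun t : ℝ => t ^ p) t‖ ≤ |p| * m ^ (p - 1) := by
    intro t (ht : m ≤ t)
    rw [deriv_rpow_const, norm_eq_abs, abs_mul, abs_of_nonneg (rpow_nonneg (hm.le.trans ht) _)]
    exact mul_le_mul_of_nonneg_left (rpow_le_rpow_of_nonpos hm ht (by linarith)) (abs_nonneg p)
  simpa [norm_eq_abs] using (convex_Ici m).norm_image_sub_le_of_norm_deriv_le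
    (fun t ht => differentiableAt_rpow_const_of_ne p (hm.trans_le ht).ne') hderiv hb ha

lemma abs_log_sub_log_le {m a b : ℝ} (hm : 0 < m) (ha : m ≤ a) (hb : m ≤ b) :
    |log a - log b| ≤ m⁻¹ * |a - b| := by
  have hderiv : ∀ t ∈ Ici m, ‖deriv log t‖ ≤ m⁻¹ := by
    intro t (ht : m ≤ t)
    rw [deriv_log, norm_eq_abs, abs_of_nonneg (inv_nonneg.2 (hm.le.trans ht))]
    exact inv_anti₀ hm ht
  simpa [norm_eq_abs] using (convex_Ici m).norm_image_sub_le_of_norm_deriv_le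
    (fun t ht => differentiableAt_log (hm.trans_le ht).ne') hderiv hb ha

lemma abs_log_le_inv_add_self {x : ℝ} (hx : 0 ≤ x) : |log x| ≤ x⁻¹ + x :=
  abs_le.2 ⟨by linarith [neg_inv_le_log hx], by linarith [log_le_self hx, inv_nonneg.2 hx]⟩

end Real

section NormedAddCommGroup

variable {E : Type*} [NormedAddCommGroup E] {u v : E}

lemma half_norm_le_norm_of_two_mul_norm_sub_le (huv : 2 * ‖u - v‖ ≤ ‖u‖) : ‖u‖ / 2 ≤ ‖v‖ := by
  linarith [norm_sub_norm_le u v]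

lemma norm_mul_norm_mul_log_sub_le {B : E → ℂ} {MB LB D : ℝ} (hLB : 0 ≤ LB)
    (hBu : ‖B u‖ ≤ MB) (hBuv : ‖B u - B v‖ ≤ LB * ‖u - v‖)
    (hu : u ≠ 0) (huv : 2 * ‖u - v‖ ≤ ‖u‖) (huD : ‖u‖ ≤ D) (hvD : ‖v‖ ≤ D) :
    ‖u‖ * ‖B u * Real.log ‖u‖ - B v * Real.log ‖v‖‖ ≤ (2 * MB + LB * (2 + D ^ 2)) * ‖u - v‖ := by
  set a := ‖u‖
  set b := ‖v‖
  set d := ‖u - v‖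
  have ha : 0 < a := norm_pos_iff.2 hu
  have hba : a / 2 ≤ b := half_norm_le_norm_of_two_mul_norm_sub_le huv
  have hb : 0 < b := by linarith
  have hlog : |Real.log a - Real.log b| ≤ 2 / a * d :=
    (Real.abs_log_sub_log_le (half_pos ha) (by linarith) hba).trans
      (by rw [inv_div]; gcongr; exact abs_norm_sub_norm_le u v)
  have hlogb : |Real.log b| ≤ 2 / a + D :=
    (Real.abs_log_le_inv_add_self hb.le).trans
      (by gcongr; rw [← inv_div]; exact inv_anti₀ (half_pos ha) hba)
  have hsplit : B u * Real.log a - B v * Real.log b =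
      B u * ((Real.log a - Real.log b : ℝ) : ℂ) + (B u - B v) * (Real.log b : ℂ) := by
    push_cast; ring
  have hMB : 0 ≤ MB := (norm_nonneg _).trans hBu
  calc a * ‖B u * Real.log a - B v * Real.log b‖
      ≤ a * (MB * (2 / a * d) + LB * d * (2 / a + D)) := by
        rw [hsplit]
        gcongr
        refine (norm_add_le _ _).trans (add_le_add ?_ ?_)
        · rw [norm_mul, Complex.norm_real, Real.norm_eq_abs]
          exact mul_le_mul hBu hlog (abs_nonneg _) hMB
        · rw [norm_mul, Complex.norm_real, Real.norm_eq_abs]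
          exact mul_le_mul hBuv hlogb (abs_nonneg _) (by positivity)
    _ = (2 * MB + LB * (2 + a * D)) * d := by field_simp
    _ ≤ (2 * MB + LB * (2 + D ^ 2)) * d := by
        have : a * D ≤ D ^ 2 := by rw [sq]; exact mul_le_mul_of_nonneg_right huD (ha.le.trans huD)
        gcongr

variable [NormedSpace ℝ E]

lemma inv_norm_smul_mem_sphere (hu : u ≠ 0) : ‖u‖⁻¹ • u ∈ sphere (0 : E) 1 := by
  simp [norm_smul, hu]

lemma norm_inv_norm_smul_sub_le (hu : u ≠ 0) :
    ‖‖u‖⁻¹ • u - ‖v‖⁻¹ • v‖ ≤ 2 * ‖u - v‖ / ‖u‖ := by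
  have ha : 0 < ‖u‖ := norm_pos_iff.2 hu
  have hsplit : ‖u‖⁻¹ • u - ‖v‖⁻¹ • v = ‖u‖⁻¹ • (u - v) + (‖u‖⁻¹ - ‖v‖⁻¹) • v := by
    rw [smul_sub, sub_smul]; abel
  have hrad : ‖(‖u‖⁻¹ - ‖v‖⁻¹) • v‖ ≤ ‖u - v‖ / ‖u‖ := by
    rcases eq_or_ne v 0 with rfl | hv
    · simp only [smul_zero, norm_zero]; positivity
    have hb : 0 < ‖v‖ := norm_pos_iff.2 hv
    calc ‖(‖u‖⁻¹ - ‖v‖⁻¹) • v‖ = |(‖u‖⁻¹ - ‖v‖⁻¹) * ‖v‖| := by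
          rw [norm_smul, Real.norm_eq_abs, abs_mul, abs_norm]
      _ = |‖v‖ - ‖u‖| / ‖u‖ := by
          rw [show (‖u‖⁻¹ - ‖v‖⁻¹) * ‖v‖ = (‖v‖ - ‖u‖) / ‖u‖ by field_simp, abs_div, abs_of_pos ha]
      _ ≤ ‖u - v‖ / ‖u‖ := by
          gcongr; rw [norm_sub_rev]; exact abs_norm_sub_norm_le v u
  calc ‖‖u‖⁻¹ • u - ‖v‖⁻¹ • v‖
      ≤ ‖‖u‖⁻¹ • (u - v)‖ + ‖(‖u‖⁻¹ - ‖v‖⁻¹) • v‖ := hsplit ▸ norm_add_le _ _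
    _ ≤ ‖u - v‖ / ‖u‖ + ‖u - v‖ / ‖u‖ := by
        rw [norm_smul, norm_inv, norm_norm, inv_mul_eq_div]; gcongr
    _ = 2 * ‖u - v‖ / ‖u‖ := by ring

end NormedAddCommGroup

section PolarKernel

variable {E F : Type*} [NormedAddCommGroup E] [NormedSpace ℝ E] [NormedAddCommGroup F]

/-- Lipschitz continuity for the distance `‖θ' - θ''‖ + |r' - r''|` on `E × ℝ` (Mathlib's product
metric is the maximum of the two). -/
def SumDistLipschitzOn (A : E × ℝ → F) (L : ℝ) (s : Set (E × ℝ)) : Prop :=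
  ∀ p ∈ s, ∀ q ∈ s, ‖A p - A q‖ ≤ L * (‖p.1 - q.1‖ + |p.2 - q.2|)

namespace SumDistLipschitzOn

variable {A : E × ℝ → F} {L D : ℝ} {e : E}

lemma nonneg (hA : SumDistLipschitzOn A L (sphere 0 1 ×ˢ Icc 0 D)) (hD : 0 ≤ D)
    (he : e ∈ sphere (0 : E) 1) : 0 ≤ L := by
  have he' : -e ∈ sphere (0 : E) 1 := by simpa using he
  have h := hA (e, 0) ⟨he, le_rfl, hD⟩ (-e, 0) ⟨he', le_rfl, hD⟩
  have h2 : ‖e - -e‖ = 2 := by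
    rw [sub_neg_eq_add, ← two_smul ℝ e, norm_smul, mem_sphere_zero_iff_norm.1 he]; norm_num
  simp only [h2, sub_self, abs_zero, add_zero] at h
  linarith [norm_nonneg (A (e, 0) - A (-e, 0))]

lemma norm_le (hA : SumDistLipschitzOn A L (sphere 0 1 ×ˢ Icc 0 D)) (hD : 0 ≤ D)
    (he : e ∈ sphere (0 : E) 1) {q : E × ℝ} (hq : q ∈ sphere (0 : E) 1 ×ˢ Icc 0 D) :
    ‖A q‖ ≤ ‖A (e, 0)‖ + L * (2 + D) := by
  have hθ : ‖q.1 - e‖ ≤ 2 := by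
    linarith [norm_sub_le q.1 e, mem_sphere_zero_iff_norm.1 hq.1, mem_sphere_zero_iff_norm.1 he]
  have hr : |q.2 - 0| ≤ D := by rw [sub_zero, abs_of_nonneg hq.2.1]; exact hq.2.2
  calc ‖A q‖ ≤ ‖A (e, 0)‖ + ‖A q - A (e, 0)‖ := norm_le_insert' _ _
    _ ≤ ‖A (e, 0)‖ + L * (2 + D) := by
        gcongr
        exact (hA q hq (e, 0) ⟨he, le_rfl, hD⟩).trans (by gcongr; exact hA.nonneg hD he)

end SumDistLipschitzOn

variable {u v : E}

noncomputable def polarKernel (p : ℝ) (A : E × ℝ → ℂ) (x : E) : ℂ :=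
  (‖x‖ ^ p : ℝ) * A (‖x‖⁻¹ • x, ‖x‖)

lemma norm_polarKernel_sub_le {p L D MA : ℝ} {A : E × ℝ → ℂ} (hp : p ≤ 0)
    (hA : SumDistLipschitzOn A L (sphere 0 1 ×ˢ Icc 0 D))
    (hMA : ∀ q ∈ sphere (0 : E) 1 ×ˢ Icc 0 D, ‖A q‖ ≤ MA)
    (hu : u ≠ 0) (huv : 2 * ‖u - v‖ ≤ ‖u‖) (huD : ‖u‖ ≤ D) (hvD : ‖v‖ ≤ D) :
    ‖polarKernel p A u - polarKernel p A v‖ ≤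
      |p| * (‖u‖ / 2) ^ (p - 1) * ‖u - v‖ * MA +
        (‖u‖ / 2) ^ p * (L * (2 * ‖u - v‖ / ‖u‖ + ‖u - v‖)) := by
  set a := ‖u‖
  set b := ‖v‖
  set d := ‖u - v‖
  have ha : 0 < a := norm_pos_iff.2 hu
  have hba : a / 2 ≤ b := half_norm_le_norm_of_two_mul_norm_sub_le huv
  have hb : 0 < b := by linarith
  have hθu : (a⁻¹ • u, a) ∈ sphere (0 : E) 1 ×ˢ Icc 0 D :=
    ⟨inv_norm_smul_mem_sphere hu, ha.le, huD⟩
  have hθv : (b⁻¹ • v, b) ∈ sphere (0 : E) 1 ×ˢ Icc 0 D :=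
    ⟨inv_norm_smul_mem_sphere (norm_pos_iff.1 hb), hb.le, hvD⟩
  have hL : 0 ≤ L := hA.nonneg (ha.le.trans huD) hθu.1
  have hpow : |a ^ p - b ^ p| ≤ |p| * (a / 2) ^ (p - 1) * d :=
    (Real.abs_rpow_sub_rpow_le_of_nonpos hp (half_pos ha) (by linarith) hba).trans
      (by gcongr; exact abs_norm_sub_norm_le u v)
  have hbp : b ^ p ≤ (a / 2) ^ p := Real.rpow_le_rpow_of_nonpos (half_pos ha) hba hp
  have hAuv : ‖A (a⁻¹ • u, a) - A (b⁻¹ • v, b)‖ ≤ L * (2 * d / a + d) :=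
    (hA _ hθu _ hθv).trans <| by
      gcongr; exacts [norm_inv_norm_smul_sub_le hu, abs_norm_sub_norm_le u v]
  have hsplit : polarKernel p A u - polarKernel p A v =
      ((a ^ p - b ^ p : ℝ) : ℂ) * A (a⁻¹ • u, a) +
        ((b ^ p : ℝ) : ℂ) * (A (a⁻¹ • u, a) - A (b⁻¹ • v, b)) := by
    simp only [polarKernel]; push_cast; ring
  have hMA₀ : 0 ≤ MA := (norm_nonneg _).trans (hMA _ hθu)
  rw [hsplit]
  refine (norm_add_le _ _).trans (add_le_add ?_ ?_)
  · rw [norm_mul, Complex.norm_real, Real.norm_eq_abs]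
    exact mul_le_mul hpow (hMA _ hθu) (norm_nonneg _) (by positivity)
  · rw [norm_mul, Complex.norm_real, Real.norm_of_nonneg (by positivity)]
    exact mul_le_mul hbp hAuv (norm_nonneg _) (by positivity)

lemma rpow_mul_norm_polarKernel_sub_le {p L D MA : ℝ} {A : E × ℝ → ℂ} (hp : p ≤ 0)
    (hA : SumDistLipschitzOn A L (sphere 0 1 ×ˢ Icc 0 D))
    (hMA : ∀ q ∈ sphere (0 : E) 1 ×ˢ Icc 0 D, ‖A q‖ ≤ MA)
    (hu : u ≠ 0) (huv : 2 * ‖u - v‖ ≤ ‖u‖) (huD : ‖u‖ ≤ D) (hvD : ‖v‖ ≤ D) :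
    ‖u‖ ^ (1 - p) * ‖polarKernel p A u - polarKernel p A v‖ ≤
      (|p| * 2 ^ (1 - p) * MA + 2 ^ (-p) * L * (2 + D)) * ‖u - v‖ := by
  set a := ‖u‖
  set d := ‖u - v‖
  have ha : 0 < a := norm_pos_iff.2 hu
  have hL : 0 ≤ L := hA.nonneg (ha.le.trans huD) (inv_norm_smul_mem_sphere hu)
  have hscale₁ : a ^ (1 - p) * (a / 2) ^ (p - 1) = 2 ^ (1 - p) := by
    rw [Real.div_rpow ha.le zero_le_two, mul_div_assoc', ← Real.rpow_add ha,
      sub_add_sub_cancel', sub_self, Real.rpow_zero, one_div, ← Real.rpow_neg zero_le_two,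
      neg_sub]
  have hscale₂ : a ^ (1 - p) * (a / 2) ^ p = 2 ^ (-p) * a := by
    rw [Real.div_rpow ha.le zero_le_two, mul_div_assoc', ← Real.rpow_add ha, sub_add_cancel,
      Real.rpow_one, Real.rpow_neg zero_le_two, div_eq_inv_mul]
  calc a ^ (1 - p) * ‖polarKernel p A u - polarKernel p A v‖
      ≤ a ^ (1 - p) * (|p| * (a / 2) ^ (p - 1) * d * MA + (a / 2) ^ p * (L * (2 * d / a + d))) :=
        by gcongr; exact norm_polarKernel_sub_le hp hA hMA hu huv huD hvD
    _ = |p| * (a ^ (1 - p) * (a / 2) ^ (p - 1)) * MA * d +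
          (a ^ (1 - p) * (a / 2) ^ p) * L * (2 * d / a + d) := by ring
    _ = |p| * 2 ^ (1 - p) * MA * d + 2 ^ (-p) * L * (2 + a) * d := by
        rw [hscale₁, hscale₂]; field_simp
    _ ≤ (|p| * 2 ^ (1 - p) * MA + 2 ^ (-p) * L * (2 + D)) * d := by
        rw [add_mul]; gcongr

end PolarKernel

section Weighted

variable {E : Type*} [NormedAddCommGroup E] [NormedSpace ℝ E] {p L D MA MB LB LC : ℝ}
  {A : E × ℝ → ℂ} {B C S : E → ℂ} {u v : E}

lemma rpow_mul_norm_sub_le (hp : p ≤ 0) (hA : SumDistLipschitzOn A L (sphere 0 1 ×ˢ Icc 0 D))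
    (hMA : ∀ q ∈ sphere (0 : E) 1 ×ˢ Icc 0 D, ‖A q‖ ≤ MA) (hLB : 0 ≤ LB)
    (hBu : ‖B u‖ ≤ MB) (hBuv : ‖B u - B v‖ ≤ LB * ‖u - v‖) (hCuv : ‖C u - C v‖ ≤ LC * ‖u - v‖)
    (hS : ∀ x ≠ 0, S x = polarKernel p A x + B x * Real.log ‖x‖ + C x)
    (hu : u ≠ 0) (huv : 2 * ‖u - v‖ ≤ ‖u‖) (huD : ‖u‖ ≤ D) (hvD : ‖v‖ ≤ D) :
    ‖u‖ ^ (1 - p) * ‖S u - S v‖ ≤ (|p| * 2 ^ (1 - p) * MA + 2 ^ (-p) * L * (2 + D) +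
      D ^ (-p) * (2 * MB + LB * (2 + D ^ 2)) + D ^ (1 - p) * LC) * ‖u - v‖ := by
  have hv : v ≠ 0 := norm_pos_iff.1 <| (half_pos (norm_pos_iff.2 hu)).trans_le
    (half_norm_le_norm_of_two_mul_norm_sub_le huv)
  have hD : 0 ≤ D := (norm_nonneg u).trans huD
  have hpolar := rpow_mul_norm_polarKernel_sub_le hp hA hMA hu huv huD hvD
  have hlog := norm_mul_norm_mul_log_sub_le hLB hBu hBuv hu huv huD hvD
  have hweight : ‖u‖ ^ (1 - p) = ‖u‖ ^ (-p) * ‖u‖ := by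
    rw [sub_eq_neg_add, Real.rpow_add_one (norm_ne_zero_iff.2 hu)]
  have hwD : ‖u‖ ^ (-p) ≤ D ^ (-p) := Real.rpow_le_rpow (norm_nonneg u) huD (by linarith)
  have hwD' : ‖u‖ ^ (1 - p) ≤ D ^ (1 - p) := Real.rpow_le_rpow (norm_nonneg u) huD (by linarith)
  rw [hS u hu, hS v hv, add_sub_add_comm, add_sub_add_comm]
  calc ‖u‖ ^ (1 - p) * ‖polarKernel p A u - polarKernel p A v +
        (B u * Real.log ‖u‖ - B v * Real.log ‖v‖) + (C u - C v)‖
      ≤ ‖u‖ ^ (1 - p) * (‖polarKernel p A u - polarKernel p A v‖ +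
        ‖B u * Real.log ‖u‖ - B v * Real.log ‖v‖‖ + ‖C u - C v‖) := by gcongr; exact norm_add₃_le
    _ = ‖u‖ ^ (1 - p) * ‖polarKernel p A u - polarKernel p A v‖ +
        ‖u‖ ^ (-p) * (‖u‖ * ‖B u * Real.log ‖u‖ - B v * Real.log ‖v‖‖) +
        ‖u‖ ^ (1 - p) * ‖C u - C v‖ := by rw [hweight]; ring
    _ ≤ (|p| * 2 ^ (1 - p) * MA + 2 ^ (-p) * L * (2 + D)) * ‖u - v‖ +
        D ^ (-p) * ((2 * MB + LB * (2 + D ^ 2)) * ‖u - v‖) + D ^ (1 - p) * (LC * ‖u - v‖) :=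
        add_le_add (add_le_add hpolar (mul_le_mul hwD hlog (by positivity) (by positivity)))
          (mul_le_mul hwD' hCuv (norm_nonneg _) (by positivity))
    _ = _ := by ring

theorem exists_rpow_mul_norm_sub_le [ProperSpace E] [Nontrivial E] (hp : p ≤ 0) (hD : 0 ≤ D)
    (hA : SumDistLipschitzOn A L (sphere 0 1 ×ˢ Icc 0 D))
    (hB : ContDiff ℝ 1 B) (hC : ContDiff ℝ 1 C)
    (hS : ∀ x ≠ 0, S x = polarKernel p A x + B x * Real.log ‖x‖ + C x) :
    ∃ M, ∀ u v : E, u ≠ 0 → 2 * ‖u - v‖ ≤ ‖u‖ → ‖u‖ ≤ D → ‖v‖ ≤ D →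
      ‖u‖ ^ (1 - p) * ‖S u - S v‖ ≤ M * ‖u - v‖ := by
  obtain ⟨e, he⟩ := (NormedSpace.sphere_nonempty (x := (0 : E))).2 zero_le_one
  obtain ⟨MB, hMB⟩ := (isCompact_closedBall (0 : E) D).exists_bound_of_continuousOn
    hB.continuous.continuousOn
  obtain ⟨LB, hLB⟩ := hB.contDiffOn.exists_lipschitzOnWith one_ne_zero (convex_closedBall 0 D)
    (isCompact_closedBall 0 D)
  obtain ⟨LC, hLC⟩ := hC.contDiffOn.exists_lipschitzOnWith one_ne_zero (convex_closedBall 0 D)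
    (isCompact_closedBall 0 D)
  refine ⟨|p| * 2 ^ (1 - p) * (‖A (e, 0)‖ + L * (2 + D)) + 2 ^ (-p) * L * (2 + D) +
    D ^ (-p) * (2 * MB + LB * (2 + D ^ 2)) + D ^ (1 - p) * LC, fun u v hu huv huD hvD => ?_⟩
  have huB : u ∈ closedBall (0 : E) D := mem_closedBall_zero_iff.2 huD
  have hvB : v ∈ closedBall (0 : E) D := mem_closedBall_zero_iff.2 hvD
  exact rpow_mul_norm_sub_le hp hA (fun q hq => hA.norm_le hD he hq) LB.2 (hMB u huB)
    (hLB.norm_sub_le huB hvB) (hLC.norm_sub_le huB hvB) hS hu huv huD hvD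

end Weighted

theorem stmt_10_general {n : ℕ} (hn : 2 ≤ n) (G : Set (EuclideanSpace ℝ (Fin n)))
    (hGb : Bornology.IsBounded G)
    (A₀ : EuclideanSpace ℝ (Fin n) → ℂ)
    (A₁ : EuclideanSpace ℝ (Fin n) → ℝ → ℂ)
    (b₀ : ℂ) (B₁ C : EuclideanSpace ℝ (Fin n) → ℂ)
    (S : EuclideanSpace ℝ (Fin n) → ℂ)
    (hS : ∀ x : EuclideanSpace ℝ (Fin n), x ≠ 0 →
      S x = (‖x‖ ^ ((2 : ℝ) - n) : ℝ) * A₀ (‖x‖⁻¹ • x)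
        + (‖x‖ ^ ((3 : ℝ) - n) : ℝ) * A₁ (‖x‖⁻¹ • x) ‖x‖
        + b₀ * (Real.log ‖x‖ : ℝ)
        + B₁ x * (Real.log ‖x‖ : ℝ) + C x)
    (L : ℝ)
    (hA : ∀ p ∈ (sphere (0 : EuclideanSpace ℝ (Fin n)) 1) ×ˢ (Icc 0 (diam G)),
          ∀ q ∈ (sphere (0 : EuclideanSpace ℝ (Fin n)) 1) ×ˢ (Icc 0 (diam G)),
            ‖(A₀ p.1 + p.2 * A₁ p.1 p.2) - (A₀ q.1 + q.2 * A₁ q.1 q.2)‖ ≤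
              L * (‖p.1 - q.1‖ + |p.2 - q.2|))
    (hB : ContDiff ℝ 1 fun x => b₀ + B₁ x) (hC1 : ContDiff ℝ 1 C) :
    ∃ M : ℝ, ∀ x' ∈ G, ∀ x'' ∈ G, x' ≠ x'' → ∀ y ∈ G,
      y ∉ ball x' (2 * ‖x' - x''‖) →
        ‖x' - y‖ ^ ((n : ℝ) - 1) * ‖S (x' - y) - S (x'' - y)‖ ≤ M * ‖x' - x''‖ := by
  have : NeZero n := ⟨by omega⟩
  have hp : (2 : ℝ) - n ≤ 0 := by
    have : (2 : ℝ) ≤ n := by exact_mod_cast hn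
    linarith
  have hS' (x) (hx : x ≠ 0) : S x = polarKernel (2 - n) (fun q => A₀ q.1 + q.2 * A₁ q.1 q.2) x +
      (b₀ + B₁ x) * Real.log ‖x‖ + C x := by
    rw [hS x hx, polarKernel, show (3 : ℝ) - n = 2 - n + 1 by ring,
      Real.rpow_add_one (norm_ne_zero_iff.2 hx)]
    push_cast; ring
  obtain ⟨M, hM⟩ := exists_rpow_mul_norm_sub_le hp diam_nonneg hA hB hC1 hS'
  refine ⟨M, fun x' hx' x'' hx'' hne y hy hyb => ?_⟩
  have hsep : 2 * ‖x' - x''‖ ≤ ‖x' - y‖ := by simpa [dist_eq_norm, norm_sub_rev] using hyb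
  have hu : x' - y ≠ 0 := norm_pos_iff.1 <|
    (mul_pos two_pos (norm_pos_iff.2 (sub_ne_zero.2 hne))).trans_le hsep
  have h := hM (x' - y) (x'' - y) hu (by rwa [sub_sub_sub_cancel_right])
    (dist_eq_norm x' y ▸ dist_le_diam_of_mem hGb hx' hy)
    (dist_eq_norm x'' y ▸ dist_le_diam_of_mem hGb hx'' hy)
  rwa [sub_sub_sub_cancel_right, show (1 : ℝ) - (2 - n) = n - 1 by ring] at h

/-- with `S` as in the general form of a fundamental solution,
`A(θ,r) = A₀(θ) + r A₁(θ,r)` Lipschitz continuous on `∂𝔹_n × [0, diam G]`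
(with constant `L` for the distance `‖θ'-θ''‖ + |r'-r''|`) and `B = b₀ + B₁`
and `C` continuously differentiable, one has
`sup { (‖x'-y‖^(n-1)/‖x'-x''‖) ‖S(x'-y) - S(x''-y)‖ } < ∞`, the supremum being
over `x', x'' ∈ G`, `x' ≠ x''`, `y ∈ G ∖ 𝔹_n(x', 2‖x'-x''‖)`. -/
theorem stmt_10 {n : ℕ} (hn : 2 ≤ n) (G : Set (EuclideanSpace ℝ (Fin n)))
    (hGne : G.Nonempty) (hGb : Bornology.IsBounded G)
    (A₀ : EuclideanSpace ℝ (Fin n) → ℂ)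
    (A₁ : EuclideanSpace ℝ (Fin n) → ℝ → ℂ)
    (b₀ : ℂ) (B₁ C : EuclideanSpace ℝ (Fin n) → ℂ)
    (hA₀ : ContinuousOn A₀ (sphere (0 : EuclideanSpace ℝ (Fin n)) 1))
    (hA₁ : Continuous fun p : EuclideanSpace ℝ (Fin n) × ℝ => A₁ p.1 p.2)
    (hB₁ : Continuous B₁) (hC : Continuous C)
    (S : EuclideanSpace ℝ (Fin n) → ℂ)
    (hS : ∀ x : EuclideanSpace ℝ (Fin n), x ≠ 0 →
      S x = (‖x‖ ^ ((2 : ℝ) - n) : ℝ) * A₀ (‖x‖⁻¹ • x)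
        + (‖x‖ ^ ((3 : ℝ) - n) : ℝ) * A₁ (‖x‖⁻¹ • x) ‖x‖
        + b₀ * (Real.log ‖x‖ : ℝ)
        + B₁ x * (Real.log ‖x‖ : ℝ) + C x)
    (L : ℝ)
    (hA : ∀ p ∈ (sphere (0 : EuclideanSpace ℝ (Fin n)) 1) ×ˢ (Icc 0 (diam G)),
          ∀ q ∈ (sphere (0 : EuclideanSpace ℝ (Fin n)) 1) ×ˢ (Icc 0 (diam G)),
            ‖(A₀ p.1 + p.2 * A₁ p.1 p.2) - (A₀ q.1 + q.2 * A₁ q.1 q.2)‖ ≤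
              L * (‖p.1 - q.1‖ + |p.2 - q.2|))
    (hB : ContDiff ℝ 1 fun x => b₀ + B₁ x) (hC1 : ContDiff ℝ 1 C) :
    ∃ M : ℝ, ∀ x' ∈ G, ∀ x'' ∈ G, x' ≠ x'' → ∀ y ∈ G,
      y ∉ ball x' (2 * ‖x' - x''‖) →
        ‖x' - y‖ ^ ((n : ℝ) - 1) * ‖S (x' - y) - S (x'' - y)‖ ≤ M * ‖x' - x''‖ :=
  stmt_10_general hn G hGb A₀ A₁ b₀ B₁ C S hS L hA hB hC1
end

section
/- Let n ∈ ℕ with n ≥ 2 and let G be a nonempty bounded subset of ℝⁿ. Let T be an invertible n×n real matrix and a⁽²⁾ ≡ TTᵗ. Let A₂ : ∂𝔹_n × ℝ → ℂⁿ be Lipschitz continuous on ∂𝔹_n × [0, diam(G)] with respect to the distance |θ'−θ''| + |r'−r''|, and let B₁, C : ℝⁿ → ℂ be twice continuously differentiable with gradients DB₁, DC. Let V : ℝⁿ∖{0} → ℂⁿ be defined by V(x) ≡ (s_n √(det a⁽²⁾))^{−1} |T⁻¹x|^{−n} xᵗ(a⁽²⁾)^{−1} + |x|^{2−n}A₂(x/|x|,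 |x|) + DB₁(x) ln|x| + DC(x), where s_n denotes the (n−1)-dimensional measure of ∂𝔹_n. Then sup{ (|x'−y|^{n}/|x'−x''|) |V(x'−y) − V(x''−y)| : x', x'' ∈ G, x' ≠ x'', y ∈ G∖𝔹_n(x', 2|x'−x''|) } < +∞. -/
open Metric Set MeasureTheory

/-- The continuous linear map on Euclidean space induced by a square real matrix. -/
noncomputable def matCLM {n : ℕ} (Λ : Matrix (Fin n) (Fin n) ℝ) :
    EuclideanSpace ℝ (Fin n) →L[ℝ] EuclideanSpace ℝ (Fin n) :=
  Matrix.toEuclideanCLM (𝕜 := ℝ) Λ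

/-- The gradient (vector of partial derivatives) of a complex-valued function on `ℝⁿ`,
as a vector of `ℂⁿ`. -/
noncomputable def cgrad {n : ℕ} (f : EuclideanSpace ℝ (Fin n) → ℂ)
    (x : EuclideanSpace ℝ (Fin n)) : EuclideanSpace ℂ (Fin n) :=
  (WithLp.equiv 2 ((_ : Fin n) → ℂ)).symm fun i => fderiv ℝ f x (EuclideanSpace.single i 1)

/-- The `(n-1)`-dimensional (Hausdorff) measure of the unit sphere `∂𝔹_n` of `ℝⁿ`. -/
noncomputable def sphereMeasure (n : ℕ) : ℝ :=
  (μH[(n : ℝ) - 1] (sphere (0 : EuclideanSpace ℝ (Fin n)) 1)).toReal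


/-!
Write `a = x' - y` and `b = x'' - y`, so that `2‖a - b‖ ≤ ‖a‖ ≤ diam G` and `‖b‖ ≤ diam G`.
Call `f` singular of order `p` if on this region `‖f a‖ ≲ ‖a‖^(-p)` and
`‖f a - f b‖ ≲ ‖a‖^(-p) · ‖a - b‖ / ‖a‖`. Orders add under products, and on a bounded region
a lower order implies a higher one. The summands of `V` are products of factors of orders
`n` and `-1` (`‖T⁻¹x‖^(-n)` and `xᵗ(a⁽²⁾)⁻¹`), `n - 2` and `0` (`‖x‖^(2-n)` and the Lipschitz
`A₂`), `1` and `0` (`ln ‖x‖`, crudely bounded by `‖x‖⁻¹`, and `DB₁`), and `0` (`DC`), so `V` is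
singular of order `n - 1`, which is the claimed estimate.
-/

variable {E F : Type*} [NormedAddCommGroup E] [NormedAddCommGroup F]

def IsSingularOfOrder (D p : ℝ) (f : E → F) : Prop :=
  ∃ K ≥ 0, ∀ a b : E, 0 < ‖a‖ → ‖a‖ ≤ D → ‖b‖ ≤ D → 2 * ‖a - b‖ ≤ ‖a‖ →
    ‖f a‖ ≤ K * ‖a‖ ^ (-p) ∧ ‖f a - f b‖ ≤ K * ‖a‖ ^ (-p) * (‖a - b‖ / ‖a‖)

namespace IsSingularOfOrder

variable {D p q : ℝ} {f g : E → F}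

theorem congr (hf : IsSingularOfOrder D p f) (hfg : ∀ x, x ≠ 0 → f x = g x) :
    IsSingularOfOrder D p g := by
  obtain ⟨K, hK, hf⟩ := hf
  refine ⟨K, hK, fun a b ha haD hbD hab => ?_⟩
  have hb : b ≠ 0 := by
    rintro rfl
    rw [sub_zero] at hab
    linarith
  rw [← hfg a (norm_pos_iff.mp ha), ← hfg b hb]
  exact hf a b ha haD hbD hab

theorem add (hf : IsSingularOfOrder D p f) (hg : IsSingularOfOrder D p g) :
    IsSingularOfOrder D p (f + g) := by
  obtain ⟨K₁, hK₁, hf⟩ := hf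
  obtain ⟨K₂, hK₂, hg⟩ := hg
  refine ⟨K₁ + K₂, by positivity, fun a b ha haD hbD hab => ?_⟩
  obtain ⟨hfa, hfab⟩ := hf a b ha haD hbD hab
  obtain ⟨hga, hgab⟩ := hg a b ha haD hbD hab
  have hsub : (f + g) a - (f + g) b = (f a - f b) + (g a - g b) := by
    simp only [Pi.add_apply]; abel
  constructor
  · calc ‖f a + g a‖ ≤ ‖f a‖ + ‖g a‖ := norm_add_le _ _
      _ ≤ _ := by linarith
  · calc ‖(f + g) a - (f + g) b‖ ≤ ‖f a - f b‖ + ‖g a - g b‖ := hsub ▸ norm_add_le _ _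
      _ ≤ _ := by linarith

theorem mono (hf : IsSingularOfOrder D p f) (hpq : p ≤ q) : IsSingularOfOrder D q f := by
  obtain ⟨K, hK, hf⟩ := hf
  refine ⟨K * |D| ^ (q - p), by positivity, fun a b ha haD hbD hab => ?_⟩
  have hpow : ‖a‖ ^ (-p) ≤ |D| ^ (q - p) * ‖a‖ ^ (-q) := by
    calc ‖a‖ ^ (-p) = ‖a‖ ^ (q - p) * ‖a‖ ^ (-q) := by
          rw [← Real.rpow_add ha]; ring_nf
      _ ≤ |D| ^ (q - p) * ‖a‖ ^ (-q) := by
          gcongr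
          exact haD.trans (le_abs_self D)
  obtain ⟨hfa, hfab⟩ := hf a b ha haD hbD hab
  constructor
  · calc ‖f a‖ ≤ K * ‖a‖ ^ (-p) := hfa
      _ ≤ K * (|D| ^ (q - p) * ‖a‖ ^ (-q)) := by gcongr
      _ = _ := by ring
  · calc ‖f a - f b‖ ≤ K * ‖a‖ ^ (-p) * (‖a - b‖ / ‖a‖) := hfab
      _ ≤ K * (|D| ^ (q - p) * ‖a‖ ^ (-q)) * (‖a - b‖ / ‖a‖) := by gcongr
      _ = _ := by ring

theorem smul {𝕜 : Type*} [NormedField 𝕜] [NormedSpace 𝕜 F] {φ : E → 𝕜}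
    (hφ : IsSingularOfOrder D p φ) (hf : IsSingularOfOrder D q f) :
    IsSingularOfOrder D (p + q) (fun x => φ x • f x) := by
  obtain ⟨K₁, hK₁, hφ⟩ := hφ
  obtain ⟨K₂, hK₂, hf⟩ := hf
  refine ⟨3 * K₁ * K₂, by positivity, fun a b ha haD hbD hab => ?_⟩
  obtain ⟨hφa, hφab⟩ := hφ a b ha haD hbD hab
  obtain ⟨hfa, hfab⟩ := hf a b ha haD hbD hab
  set u := ‖a‖ ^ (-p)
  set v := ‖a‖ ^ (-q)
  set t := ‖a - b‖ / ‖a‖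
  have ht : t ≤ 1 := by
    rw [div_le_one ha]; linarith [norm_nonneg (a - b)]
  have huv : ‖a‖ ^ (-(p + q)) = u * v := by rw [neg_add, Real.rpow_add ha]
  have hdecomp : φ a • f a - φ b • f b =
      φ a • (f a - f b) + (φ a - φ b) • f a - (φ a - φ b) • (f a - f b) := by
    simp only [smul_sub, sub_smul]; abel
  have hu : 0 ≤ u := by positivity
  have hv : 0 ≤ v := by positivity
  have ht0 : 0 ≤ t := by positivity
  rw [huv]
  constructor
  · rw [norm_smul]
    calc ‖φ a‖ * ‖f a‖ ≤ (K₁ * u) * (K₂ * v) := by gcongr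
      _ ≤ 3 * K₁ * K₂ * (u * v) := by nlinarith [mul_nonneg (mul_nonneg hK₁ hK₂) (mul_nonneg hu hv)]
  · rw [hdecomp]
    calc ‖φ a • (f a - f b) + (φ a - φ b) • f a - (φ a - φ b) • (f a - f b)‖
        ≤ ‖φ a‖ * ‖f a - f b‖ + ‖φ a - φ b‖ * ‖f a‖ + ‖φ a - φ b‖ * ‖f a - f b‖ := by
          refine (norm_sub_le _ _).trans ?_
          rw [← norm_smul, ← norm_smul, ← norm_smul]
          gcongr
          exact norm_add_le _ _
      _ ≤ (K₁ * u) * (K₂ * v * t) + (K₁ * u * t) * (K₂ * v) + (K₁ * u * t) * (K₂ * v * t) := by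
          gcongr
      _ ≤ 3 * K₁ * K₂ * (u * v) * t := by
          have : 0 ≤ K₁ * K₂ * u * v * t := by positivity
          nlinarith

theorem ofReal {φ : E → ℝ} (hφ : IsSingularOfOrder D p φ) :
    IsSingularOfOrder D p (fun x => (φ x : ℂ)) := by
  simpa only [IsSingularOfOrder, ← Complex.ofReal_sub, Complex.norm_real] using hφ

theorem rpow_mul_norm_sub_le (hf : IsSingularOfOrder D (q - 1) f) :
    ∃ K, ∀ a b : E, 0 < ‖a‖ → ‖a‖ ≤ D → ‖b‖ ≤ D → 2 * ‖a - b‖ ≤ ‖a‖ →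
      ‖a‖ ^ q * ‖f a - f b‖ ≤ K * ‖a - b‖ := by
  obtain ⟨K, hK, hf⟩ := hf
  refine ⟨K, fun a b ha haD hbD hab => ?_⟩
  have hpow : ‖a‖ ^ q * ‖a‖ ^ (-(q - 1)) = ‖a‖ := by
    rw [← Real.rpow_add ha]; norm_num
  calc ‖a‖ ^ q * ‖f a - f b‖ ≤ ‖a‖ ^ q * (K * ‖a‖ ^ (-(q - 1)) * (‖a - b‖ / ‖a‖)) := by
        gcongr; exact (hf a b ha haD hbD hab).2
    _ = K * ‖a - b‖ := by rw [← mul_assoc, mul_left_comm, hpow]; field_simp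

end IsSingularOfOrder

theorem ContinuousLinearMap.isSingularOfOrder [NormedSpace ℝ E] [NormedSpace ℝ F] (Λ : E →L[ℝ] F)
    (D : ℝ) : IsSingularOfOrder D (-1) Λ := by
  refine ⟨‖Λ‖, norm_nonneg _, fun a b ha _ _ _ => ?_⟩
  rw [neg_neg, Real.rpow_one, ← map_sub]
  refine ⟨Λ.le_opNorm a, ?_⟩
  calc ‖Λ (a - b)‖ ≤ ‖Λ‖ * ‖a - b‖ := Λ.le_opNorm _
    _ = ‖Λ‖ * ‖a‖ * (‖a - b‖ / ‖a‖) := by field_simp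

theorem ContDiff.isSingularOfOrder_zero [NormedSpace ℝ E] [ProperSpace E] [NormedSpace ℝ F]
    {f : E → F} (hf : ContDiff ℝ 1 f) (D : ℝ) : IsSingularOfOrder D 0 f := by
  obtain ⟨K₀, hK₀, hbound⟩ := ((isCompact_closedBall (0 : E) D).image hf.continuous).isBounded
    |>.exists_pos_norm_le
  obtain ⟨K₁, hlip⟩ := hf.contDiffOn.exists_lipschitzOnWith one_ne_zero (convex_closedBall 0 D)
    (isCompact_closedBall 0 D)
  refine ⟨K₀ + K₁ * |D|, by positivity, fun a b ha haD hbD hab => ?_⟩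
  have haB : a ∈ closedBall (0 : E) D := mem_closedBall_zero_iff.mpr haD
  have hbB : b ∈ closedBall (0 : E) D := mem_closedBall_zero_iff.mpr hbD
  have hfa : ‖f a‖ ≤ K₀ := hbound _ (mem_image_of_mem f haB)
  rw [neg_zero, Real.rpow_zero, mul_one]
  constructor
  · nlinarith [abs_nonneg D, K₁.2]
  · calc ‖f a - f b‖ ≤ K₁ * ‖a - b‖ := hlip.norm_sub_le haB hbB
      _ = K₁ * ‖a‖ * (‖a - b‖ / ‖a‖) := by field_simp
      _ ≤ (K₀ + K₁ * |D|) * (‖a - b‖ / ‖a‖) := by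
          gcongr
          nlinarith [le_abs_self D, K₁.2]

def IsSingularProfile (R p : ℝ) (φ : ℝ → ℝ) : Prop :=
  ∃ K ≥ 0, ∃ φ' : ℝ → ℝ, ∀ s, 0 < s → s ≤ R →
    HasDerivAt φ (φ' s) s ∧ |φ s| ≤ K * s ^ (-p) ∧ |φ' s| ≤ K * s ^ (-p - 1)

theorem IsSingularProfile.const_mul {R p : ℝ} {φ : ℝ → ℝ} (hφ : IsSingularProfile R p φ)
    (c : ℝ) : IsSingularProfile R p (fun s => c * φ s) := by
  obtain ⟨K, hK, φ', hφ⟩ := hφ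
  refine ⟨|c| * K, by positivity, fun s => c * φ' s, fun s hs hsR => ?_⟩
  obtain ⟨hd, h0, h1⟩ := hφ s hs hsR
  refine ⟨hd.const_mul c, ?_, ?_⟩ <;> rw [abs_mul, mul_assoc] <;> gcongr

theorem isSingularProfile_rpow {q : ℝ} (hq : q ≤ 0) (R : ℝ) :
    IsSingularProfile R (-q) (fun s => s ^ q) := by
  refine ⟨1 - q, by linarith, fun s => q * s ^ (q - 1), fun s hs _ => ?_⟩
  rw [neg_neg, abs_mul, abs_of_nonpos hq, abs_of_pos (Real.rpow_pos_of_pos hs _),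
    abs_of_pos (Real.rpow_pos_of_pos hs _)]
  refine ⟨Real.hasDerivAt_rpow_const (Or.inl hs.ne'), ?_, ?_⟩
  · nlinarith [Real.rpow_pos_of_pos hs q]
  · nlinarith [Real.rpow_pos_of_pos hs (q - 1)]

theorem isSingularProfile_log (R : ℝ) : IsSingularProfile R 1 Real.log := by
  refine ⟨1 + R ^ 2, by positivity, fun s => s⁻¹, fun s hs hsR => ?_⟩
  have hs2 : s ^ (-1 - 1 : ℝ) = (s ^ 2)⁻¹ := by
    rw [show (-1 - 1 : ℝ) = -(2 : ℕ) by norm_num, Real.rpow_neg hs.le, Real.rpow_natCast]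
  rw [Real.rpow_neg_one, hs2, abs_of_pos (inv_pos.mpr hs)]
  refine ⟨Real.hasDerivAt_log hs.ne', ?_, ?_⟩
  · have hlog : |Real.log s| ≤ s⁻¹ + s := by
      rw [abs_le]
      constructor
      · have := Real.log_le_sub_one_of_pos (inv_pos.mpr hs)
        rw [Real.log_inv] at this
        linarith
      · linarith [Real.log_le_sub_one_of_pos hs, inv_pos.mpr hs]
    calc |Real.log s| ≤ s⁻¹ + s := hlog
      _ = (1 + s ^ 2) * s⁻¹ := by field_simp
      _ ≤ (1 + R ^ 2) * s⁻¹ := by gcongr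
  · calc s⁻¹ = s * (s ^ 2)⁻¹ := by field_simp
      _ ≤ (1 + R ^ 2) * (s ^ 2)⁻¹ := by gcongr; nlinarith

theorem IsSingularProfile.exists_abs_sub_le {R p : ℝ} {φ : ℝ → ℝ} (hφ : IsSingularProfile R p φ)
    (hp : -1 ≤ p) : ∃ K ≥ 0, ∀ m s t : ℝ, 0 < m → m ≤ s → m ≤ t → s ≤ R → t ≤ R →
      |φ s| ≤ K * s ^ (-p) ∧ |φ s - φ t| ≤ K * m ^ (-p - 1) * |s - t| := by
  obtain ⟨K, hK, φ', hφ⟩ := hφ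
  refine ⟨K, hK, fun m s t hm hms hmt hsR htR => ⟨(hφ s (hm.trans_le hms) hsR).2.1, ?_⟩⟩
  have hderiv : ∀ x ∈ Icc m R, HasDerivWithinAt φ (φ' x) (Icc m R) x := fun x hx =>
    (hφ x (hm.trans_le hx.1) hx.2).1.hasDerivWithinAt
  have hbound : ∀ x ∈ Icc m R, ‖φ' x‖ ≤ K * m ^ (-p - 1) := fun x hx => by
    calc ‖φ' x‖ ≤ K * x ^ (-p - 1) := (hφ x (hm.trans_le hx.1) hx.2).2.2
      _ ≤ K * m ^ (-p - 1) :=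
          mul_le_mul_of_nonneg_left (Real.rpow_le_rpow_of_nonpos hm hx.1 (by linarith)) hK
  simpa only [Real.norm_eq_abs] using
    (convex_Icc m R).norm_image_sub_le_of_norm_hasDerivWithin_le hderiv hbound
      ⟨hmt, htR⟩ ⟨hms, hsR⟩

theorem Real.div_rpow_neg {r k : ℝ} (hr : 0 ≤ r) (hk : 0 < k) (e : ℝ) :
    (r / k) ^ (-e) = k ^ e * r ^ (-e) := by
  rw [Real.div_rpow hr hk.le, Real.rpow_neg hk.le, div_inv_eq_mul, mul_comm]

theorem IsSingularProfile.isSingularOfOrder_comp [NormedSpace ℝ E] {E' : Type*}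
    [NormedAddCommGroup E'] [NormedSpace ℝ E'] {D p c : ℝ} {φ : ℝ → ℝ} (hp : 0 ≤ p)
    (S : E →L[ℝ] E') (hS : ∀ x, ‖x‖ ≤ c * ‖S x‖) (hφ : IsSingularProfile (‖S‖ * D) p φ) :
    IsSingularOfOrder D p (fun x => φ ‖S x‖) := by
  obtain ⟨K, hK, hφ⟩ := hφ.exists_abs_sub_le (by linarith)
  refine ⟨K * (|c| ^ p + (2 * |c|) ^ (p + 1) * ‖S‖), by positivity,
    fun a b ha haD hbD hab => ?_⟩
  have hc : 0 < c := pos_of_mul_pos_left (ha.trans_le (hS a)) (norm_nonneg _)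
  rw [abs_of_pos hc]
  have hsa : ‖a‖ / c ≤ ‖S a‖ := by rw [div_le_iff₀' hc]; exact hS a
  have hsa' : ‖a‖ / (2 * c) ≤ ‖S a‖ := le_trans (by gcongr; linarith) hsa
  have hsb : ‖a‖ / (2 * c) ≤ ‖S b‖ := by
    rw [div_le_iff₀' (by positivity)]; linarith [hS b, norm_sub_norm_le a b]
  have hsab : |‖S a‖ - ‖S b‖| ≤ ‖S‖ * ‖a - b‖ := by
    refine (abs_norm_sub_norm_le _ _).trans ?_
    rw [← map_sub]
    exact S.le_opNorm _
  obtain ⟨hφa, hφab⟩ := hφ _ _ _ (by positivity) hsa' hsb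
    ((S.le_opNorm a).trans (by gcongr)) ((S.le_opNorm b).trans (by gcongr))
  constructor
  · calc |φ ‖S a‖| ≤ K * ‖S a‖ ^ (-p) := hφa
      _ ≤ K * (‖a‖ / c) ^ (-p) :=
          mul_le_mul_of_nonneg_left
            (Real.rpow_le_rpow_of_nonpos (by positivity) hsa (by linarith)) hK
      _ = K * c ^ p * ‖a‖ ^ (-p) := by rw [Real.div_rpow_neg ha.le hc]; ring
      _ ≤ _ := by gcongr; nlinarith [norm_nonneg S, (by positivity : 0 ≤ (2 * c) ^ (p + 1))]
  · calc |φ ‖S a‖ - φ ‖S b‖|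
        ≤ K * (‖a‖ / (2 * c)) ^ (-p - 1) * |‖S a‖ - ‖S b‖| := hφab
      _ ≤ K * (‖a‖ / (2 * c)) ^ (-p - 1) * (‖S‖ * ‖a - b‖) := by gcongr
      _ = K * ((2 * c) ^ (p + 1) * ‖S‖) * ‖a‖ ^ (-p) * (‖a - b‖ / ‖a‖) := by
          rw [show -p - 1 = -(p + 1) by ring, Real.div_rpow_neg ha.le (by positivity),
            show -(p + 1) = -p - 1 by ring, Real.rpow_sub_one ha.ne']
          ring
      _ ≤ _ := by gcongr; nlinarith [(by positivity : 0 ≤ c ^ p)]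

theorem norm_inv_norm_smul_sub_inv_norm_smul_le [NormedSpace ℝ E] {a b : E} (ha : a ≠ 0)
    (hb : b ≠ 0) : ‖‖a‖⁻¹ • a - ‖b‖⁻¹ • b‖ ≤ 2 * ‖a - b‖ / ‖a‖ := by
  have ha0 : 0 < ‖a‖ := norm_pos_iff.mpr ha
  have hb0 : 0 < ‖b‖ := norm_pos_iff.mpr hb
  have hsplit : ‖a‖⁻¹ • a - ‖b‖⁻¹ • b = ‖a‖⁻¹ • (a - b) + (‖a‖⁻¹ - ‖b‖⁻¹) • b := by
    rw [smul_sub, sub_smul]; abel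
  have hradial : ‖(‖a‖⁻¹ - ‖b‖⁻¹) • b‖ ≤ ‖a - b‖ / ‖a‖ := by
    rw [norm_smul, Real.norm_eq_abs, inv_sub_inv ha0.ne' hb0.ne', abs_div,
      abs_of_pos (mul_pos ha0 hb0), abs_sub_comm]
    calc |‖a‖ - ‖b‖| / (‖a‖ * ‖b‖) * ‖b‖ = |‖a‖ - ‖b‖| / ‖a‖ := by field_simp
      _ ≤ ‖a - b‖ / ‖a‖ := by gcongr; exact abs_norm_sub_norm_le a b
  calc ‖‖a‖⁻¹ • a - ‖b‖⁻¹ • b‖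
      ≤ ‖‖a‖⁻¹ • (a - b)‖ + ‖(‖a‖⁻¹ - ‖b‖⁻¹) • b‖ := hsplit ▸ norm_add_le _ _
    _ ≤ ‖a - b‖ / ‖a‖ + ‖a - b‖ / ‖a‖ := by
        rw [norm_smul, norm_inv, norm_norm, inv_mul_eq_div]; gcongr
    _ = 2 * ‖a - b‖ / ‖a‖ := by ring

section Polar

variable {g : E → ℝ → F} {D L : ℝ}

theorem exists_pos_norm_le_of_norm_sub_le
    (hg : ∀ p ∈ sphere (0 : E) 1 ×ˢ Icc 0 D, ∀ q ∈ sphere (0 : E) 1 ×ˢ Icc 0 D,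
      ‖g p.1 p.2 - g q.1 q.2‖ ≤ L * (‖p.1 - q.1‖ + |p.2 - q.2|)) :
    ∃ K > 0, ∀ θ ∈ sphere (0 : E) 1, ∀ ρ ∈ Icc 0 D, ‖g θ ρ‖ ≤ K := by
  have hbdd : Bornology.IsBounded ((fun p : E × ℝ => g p.1 p.2) '' sphere 0 1 ×ˢ Icc 0 D) := by
    refine isBounded_image_iff.2 ⟨|L| * (2 + |D|), fun p hp q hq => ?_⟩
    have hθ : ‖p.1 - q.1‖ ≤ 2 := by
      have := norm_sub_le p.1 q.1
      rw [mem_sphere_zero_iff_norm.mp hp.1, mem_sphere_zero_iff_norm.mp hq.1] at this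
      linarith
    have hρ : |p.2 - q.2| ≤ |D| :=
      (abs_sub_le_of_nonneg_of_le hp.2.1 hp.2.2 hq.2.1 hq.2.2).trans (le_abs_self D)
    rw [dist_eq_norm]
    refine (hg p hp q hq).trans ?_
    calc L * (‖p.1 - q.1‖ + |p.2 - q.2|) ≤ |L| * (‖p.1 - q.1‖ + |p.2 - q.2|) := by
          gcongr; exact le_abs_self L
      _ ≤ |L| * (2 + |D|) := by gcongr
  obtain ⟨K, hK, hbound⟩ := hbdd.exists_pos_norm_le
  exact ⟨K, hK, fun θ hθ ρ hρ => hbound _ (mem_image_of_mem _ (mk_mem_prod hθ hρ))⟩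

theorem isSingularOfOrder_zero_polar [NormedSpace ℝ E]
    (hg : ∀ p ∈ sphere (0 : E) 1 ×ˢ Icc 0 D, ∀ q ∈ sphere (0 : E) 1 ×ˢ Icc 0 D,
      ‖g p.1 p.2 - g q.1 q.2‖ ≤ L * (‖p.1 - q.1‖ + |p.2 - q.2|)) :
    IsSingularOfOrder D 0 (fun x => g (‖x‖⁻¹ • x) ‖x‖) := by
  obtain ⟨K₀, hK₀, hbound⟩ := exists_pos_norm_le_of_norm_sub_le hg
  refine ⟨K₀ + |L| * (2 + |D|), by positivity, fun a b ha haD hbD hab => ?_⟩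
  have ha' : a ≠ 0 := norm_pos_iff.mp ha
  have hb' : b ≠ 0 := norm_pos_iff.mp (by linarith [norm_sub_norm_le a b])
  have hθa : ‖a‖⁻¹ • a ∈ sphere (0 : E) 1 :=
    mem_sphere_zero_iff_norm.2 (NormedSpace.norm_normalize_eq_one_iff.2 ha')
  have hθb : ‖b‖⁻¹ • b ∈ sphere (0 : E) 1 :=
    mem_sphere_zero_iff_norm.2 (NormedSpace.norm_normalize_eq_one_iff.2 hb')
  rw [neg_zero, Real.rpow_zero, mul_one]
  constructor
  · have := hbound _ hθa _ ⟨norm_nonneg a, haD⟩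
    nlinarith [abs_nonneg L, abs_nonneg D]
  · calc ‖g (‖a‖⁻¹ • a) ‖a‖ - g (‖b‖⁻¹ • b) ‖b‖‖
        ≤ L * (‖‖a‖⁻¹ • a - ‖b‖⁻¹ • b‖ + |‖a‖ - ‖b‖|) :=
          hg (‖a‖⁻¹ • a, ‖a‖) ⟨hθa, norm_nonneg a, haD⟩ (‖b‖⁻¹ • b, ‖b‖)
            ⟨hθb, norm_nonneg b, hbD⟩
      _ ≤ |L| * (2 * ‖a - b‖ / ‖a‖ + ‖a - b‖) := by
          gcongr
          · exact le_abs_self L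
          · exact norm_inv_norm_smul_sub_inv_norm_smul_le ha' hb'
          · exact abs_norm_sub_norm_le a b
      _ = |L| * (2 + ‖a‖) * (‖a - b‖ / ‖a‖) := by field_simp
      _ ≤ (K₀ + |L| * (2 + |D|)) * (‖a - b‖ / ‖a‖) := by
          gcongr
          nlinarith [abs_nonneg L, le_abs_self D]

end Polar

section Euclidean

variable {n : ℕ}

theorem ContDiff.cgrad {f : EuclideanSpace ℝ (Fin n) → ℂ} {k m : WithTop ℕ∞}
    (hf : ContDiff ℝ k f) (hmk : m + 1 ≤ k) : ContDiff ℝ m (cgrad f) := by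
  have hpartial : ContDiff ℝ m fun x (i : Fin n) => fderiv ℝ f x (EuclideanSpace.single i 1) :=
    contDiff_pi.2 fun i => (hf.fderiv_right hmk).clm_apply contDiff_const
  exact (PiLp.continuousLinearEquiv 2 ℝ (fun _ : Fin n => ℂ)).symm.contDiff.comp hpartial

noncomputable def vecMulCLM (M : Matrix (Fin n) (Fin n) ℝ) :
    EuclideanSpace ℝ (Fin n) →L[ℝ] EuclideanSpace ℂ (Fin n) :=
  LinearMap.toContinuousLinearMap
  { toFun := fun x => (WithLp.equiv 2 ((_ : Fin n) → ℂ)).symm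
      fun i => ((Matrix.vecMul (fun j => x j) M i : ℝ) : ℂ)
    map_add' := fun x y => by
      ext i
      simp [Matrix.vecMul, dotProduct, Finset.sum_add_distrib, add_mul]
    map_smul' := fun c x => by
      ext i
      simp [Matrix.vecMul, dotProduct, Finset.mul_sum, mul_assoc] }

theorem norm_le_norm_matCLM_mul_norm_matCLM_inv {T : Matrix (Fin n) (Fin n) ℝ} (hT : IsUnit T)
    (x : EuclideanSpace ℝ (Fin n)) : ‖x‖ ≤ ‖matCLM T‖ * ‖matCLM T⁻¹ x‖ := by
  have hinv : matCLM T (matCLM T⁻¹ x) = x := by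
    have h := congrArg (fun M => Matrix.toEuclideanCLM (𝕜 := ℝ) M x)
      (Matrix.mul_nonsing_inv T ((Matrix.isUnit_iff_isUnit_det T).mp hT))
    rw [map_mul, map_one] at h
    exact h
  calc ‖x‖ = ‖matCLM T (matCLM T⁻¹ x)‖ := by rw [hinv]
    _ ≤ ‖matCLM T‖ * ‖matCLM T⁻¹ x‖ := (matCLM T).le_opNorm _

end Euclidean

theorem stmt_14_general {n : ℕ} (hn : 2 ≤ n) (G : Set (EuclideanSpace ℝ (Fin n)))
    (hGb : Bornology.IsBounded G)
    (T : Matrix (Fin n) (Fin n) ℝ) (hT : IsUnit T)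
    (a2 : Matrix (Fin n) (Fin n) ℝ)
    (A₂ : EuclideanSpace ℝ (Fin n) → ℝ → EuclideanSpace ℂ (Fin n))
    (L : ℝ)
    (hA₂ : ∀ p ∈ (sphere (0 : EuclideanSpace ℝ (Fin n)) 1) ×ˢ (Icc 0 (diam G)),
           ∀ q ∈ (sphere (0 : EuclideanSpace ℝ (Fin n)) 1) ×ˢ (Icc 0 (diam G)),
             ‖A₂ p.1 p.2 - A₂ q.1 q.2‖ ≤ L * (‖p.1 - q.1‖ + |p.2 - q.2|))
    (B₁ C : EuclideanSpace ℝ (Fin n) → ℂ)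
    (hB₁ : ContDiff ℝ 2 B₁) (hC : ContDiff ℝ 2 C)
    (V : EuclideanSpace ℝ (Fin n) → EuclideanSpace ℂ (Fin n))
    (hV : ∀ x : EuclideanSpace ℝ (Fin n), x ≠ 0 →
      V x = (((sphereMeasure n * Real.sqrt a2.det)⁻¹ *
              ‖matCLM T⁻¹ x‖ ^ (-(n : ℝ)) : ℝ) : ℂ) •
              ((WithLp.equiv 2 ((_ : Fin n) → ℂ)).symm fun i =>
                ((Matrix.vecMul (fun j => x j) a2⁻¹ i : ℝ) : ℂ))
        + ((‖x‖ ^ ((2 : ℝ) - n) : ℝ) : ℂ) • A₂ (‖x‖⁻¹ • x) ‖x‖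
        + ((Real.log ‖x‖ : ℝ) : ℂ) • cgrad B₁ x
        + cgrad C x) :
    ∃ M : ℝ, ∀ x' ∈ G, ∀ x'' ∈ G, x' ≠ x'' → ∀ y ∈ G,
      y ∉ ball x' (2 * ‖x' - x''‖) →
        ‖x' - y‖ ^ (n : ℝ) * ‖V (x' - y) - V (x'' - y)‖ ≤ M * ‖x' - x''‖ := by
  set D := diam G
  have hn' : (2 : ℝ) ≤ n := by exact_mod_cast hn
  have hfund : IsSingularOfOrder D (-(-(n : ℝ)) + -1) fun x =>
      (((sphereMeasure n * Real.sqrt a2.det)⁻¹ * ‖matCLM T⁻¹ x‖ ^ (-(n : ℝ)) : ℝ) : ℂ) •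
        vecMulCLM a2⁻¹ x :=
    (((isSingularProfile_rpow (by linarith) _).const_mul _).isSingularOfOrder_comp
      (by linarith) _ (norm_le_norm_matCLM_mul_norm_matCLM_inv hT)).ofReal.smul
      ((vecMulCLM a2⁻¹).isSingularOfOrder D)
  have hpolar : IsSingularOfOrder D (-(2 - n : ℝ) + 0) fun x =>
      ((‖x‖ ^ ((2 : ℝ) - n) : ℝ) : ℂ) • A₂ (‖x‖⁻¹ • x) ‖x‖ :=
    ((isSingularProfile_rpow (by linarith) _).isSingularOfOrder_comp (c := 1) (by linarith)
      (ContinuousLinearMap.id ℝ _) fun x => (one_mul ‖x‖).ge).ofReal.smul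
      (isSingularOfOrder_zero_polar hA₂)
  have hlog : IsSingularOfOrder D (1 + 0) fun x => ((Real.log ‖x‖ : ℝ) : ℂ) • cgrad B₁ x :=
    ((isSingularProfile_log _).isSingularOfOrder_comp (c := 1) zero_le_one
      (ContinuousLinearMap.id ℝ _) fun x => (one_mul ‖x‖).ge).ofReal.smul
      ((hB₁.cgrad (by norm_num)).isSingularOfOrder_zero D)
  have hsmooth : IsSingularOfOrder D 0 (cgrad C) :=
    (hC.cgrad (by norm_num)).isSingularOfOrder_zero D
  have hV' : IsSingularOfOrder D (n - 1) V :=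
    ((((hfund.mono (by linarith)).add (hpolar.mono (by linarith))).add
      (hlog.mono (by linarith))).add (hsmooth.mono (by linarith))).congr
      fun x hx => (hV x hx).symm
  obtain ⟨M, hM⟩ := hV'.rpow_mul_norm_sub_le
  refine ⟨M, fun x' hx' x'' hx'' hne y hy hyb => ?_⟩
  have hsub : x' - y - (x'' - y) = x' - x'' := by abel
  have hfar : 2 * ‖x' - x''‖ ≤ ‖x' - y‖ := by
    simpa only [mem_ball, not_lt, dist_eq_norm'] using hyb
  rw [← hsub] at hfar ⊢
  refine hM _ _ ?_ ?_ ?_ hfar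
  · linarith [norm_pos_iff.mpr (sub_ne_zero.mpr hne), hsub ▸ hfar]
  · rw [← dist_eq_norm]; exact dist_le_diam_of_mem hGb hx' hy
  · rw [← dist_eq_norm]; exact dist_le_diam_of_mem hGb hx'' hy

/-- if `V(x) = (s_n √(det a⁽²⁾))⁻¹ ‖T⁻¹x‖^(-n) xᵗ(a⁽²⁾)⁻¹
+ ‖x‖^(2-n) A₂(x/‖x‖, ‖x‖) + DB₁(x) ln ‖x‖ + DC(x)` with `a⁽²⁾ = T Tᵗ`,
`A₂` Lipschitz continuous on `∂𝔹_n × [0, diam G]` (with constant `L` for the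
distance `‖θ'-θ''‖ + |r'-r''|`) and `B₁, C` twice continuously differentiable,
then `sup { (‖x'-y‖^n/‖x'-x''‖) ‖V(x'-y) - V(x''-y)‖ } < ∞`, the supremum being
over `x', x'' ∈ G`, `x' ≠ x''`, `y ∈ G ∖ 𝔹_n(x', 2‖x'-x''‖)`. -/
theorem stmt_14 {n : ℕ} (hn : 2 ≤ n) (G : Set (EuclideanSpace ℝ (Fin n)))
    (hGne : G.Nonempty) (hGb : Bornology.IsBounded G)
    (T : Matrix (Fin n) (Fin n) ℝ) (hT : IsUnit T)
    (a2 : Matrix (Fin n) (Fin n) ℝ) (ha2 : a2 = T * T.transpose)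
    (A₂ : EuclideanSpace ℝ (Fin n) → ℝ → EuclideanSpace ℂ (Fin n))
    (L : ℝ)
    (hA₂ : ∀ p ∈ (sphere (0 : EuclideanSpace ℝ (Fin n)) 1) ×ˢ (Icc 0 (diam G)),
           ∀ q ∈ (sphere (0 : EuclideanSpace ℝ (Fin n)) 1) ×ˢ (Icc 0 (diam G)),
             ‖A₂ p.1 p.2 - A₂ q.1 q.2‖ ≤ L * (‖p.1 - q.1‖ + |p.2 - q.2|))
    (B₁ C : EuclideanSpace ℝ (Fin n) → ℂ)
    (hB₁ : ContDiff ℝ 2 B₁) (hC : ContDiff ℝ 2 C)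
    (V : EuclideanSpace ℝ (Fin n) → EuclideanSpace ℂ (Fin n))
    (hV : ∀ x : EuclideanSpace ℝ (Fin n), x ≠ 0 →
      V x = (((sphereMeasure n * Real.sqrt a2.det)⁻¹ *
              ‖matCLM T⁻¹ x‖ ^ (-(n : ℝ)) : ℝ) : ℂ) •
              ((WithLp.equiv 2 ((_ : Fin n) → ℂ)).symm fun i =>
                ((Matrix.vecMul (fun j => x j) a2⁻¹ i : ℝ) : ℂ))
        + ((‖x‖ ^ ((2 : ℝ) - n) : ℝ) : ℂ) • A₂ (‖x‖⁻¹ • x) ‖x‖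
        + ((Real.log ‖x‖ : ℝ) : ℂ) • cgrad B₁ x
        + cgrad C x) :
    ∃ M : ℝ, ∀ x' ∈ G, ∀ x'' ∈ G, x' ≠ x'' → ∀ y ∈ G,
      y ∉ ball x' (2 * ‖x' - x''‖) →
        ‖x' - y‖ ^ (n : ℝ) * ‖V (x' - y) - V (x'' - y)‖ ≤ M * ‖x' - x''‖ :=
  stmt_14_general hn G hGb T hT a2 A₂ L hA₂ B₁ C hB₁ hC V hV
end
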